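/- Let A be a finite nonempty alphabet. If L₁ is Π₁_{d₁}[Reg]-definable and L₂ is Π₁_{d₂}[Reg]-definable, then L₁ ∩ L₂ and L₁ ∪ L₂ are each Π₁_d[Reg]-definable for some d ≥ 1 (indeed one may take d = d₁ + d₂). -/

import Mathlib

def NumPredEncoding {d : ℕ} (N : (Fin d → ℕ) → ℕ → Prop) :
    Language (Finset (Fin d)) :=
  {u | ∃ p : Fin d → Fin u.length,
    (∀ j : Fin d, ∀ q : Fin u.length, j ∈ u.get q ↔ q = p j) ∧
    N (fun j => (p j : ℕ)) u.length}

def IsRegularNumPred {d : ℕ} (N : (Fin d → ℕ) → ℕ → Prop) : Prop :=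
  (NumPredEncoding N).IsRegular

def Pi1RegDefinable (A : Type*) (d : ℕ) (L : Set (List A)) : Prop :=
  ∃ N : (Fin d → A) → (Fin d → ℕ) → ℕ → Prop,
    (∀ a : Fin d → A, IsRegularNumPred (N a)) ∧
    ∀ w : List A, w ∈ L ↔ ∀ i : Fin d → Fin w.length,
      N (fun j => w.get (i j)) (fun j => (i j : ℕ)) w.length

/-!
Combine the two formulas by letting the first `d₁` variables range over the positions of the first
formula and the last `d₂` over those of the second; the new numerical predicate is the conjunction
(resp. disjunction) of the two old ones, read off the corresponding coordinates. Its encoding is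
regular because reading off coordinates is a letter-to-letter relabelling of marked words (a
preimage of a regular language under `List.map`), intersected with the regular language of
well-marked words, in which every mark occurs exactly once; the latter is regular by Myhill–Nerode,
since a prefix only matters through its mark counts capped at `2`.
-/

open Finset

namespace Language

theorem IsRegular.preimage_map {α β : Type*} {L : Language β} (h : L.IsRegular) (f : α → β) :
    Language.IsRegular (T := α) (List.map f ⁻¹' L) := by
  obtain ⟨σ, _, M, rfl⟩ := h
  exact ⟨σ, inferInstance, M.comap f, M.accepts_comap f⟩

theorem isRegular_setOf_forall_countP_eq_one {α ι : Type*} [Finite ι] (p : ι → α → Bool) :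
    Language.IsRegular {u : List α | ∀ i, u.countP (p i) = 1} := by
  refine IsRegular.of_finite_range_leftQuotient ?_
  let quotientOfCounts (c : ι → Fin 3) : Language α := {v | ∀ i, (c i : ℕ) + v.countP (p i) = 1}
  refine (Set.finite_range quotientOfCounts).subset ?_
  rintro _ ⟨x, rfl⟩
  refine ⟨fun i => ⟨min (x.countP (p i)) 2, by omega⟩, ?_⟩
  ext v
  show (∀ i, min (x.countP (p i)) 2 + v.countP (p i) = 1) ↔ ∀ i, (x ++ v).countP (p i) = 1
  simp only [List.countP_append]
  exact forall_congr' fun i => by omega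

end Language

theorem List.card_filter_get_eq_countP {α : Type*} (l : List α) (P : α → Bool) :
    #{q : Fin l.length | P (l.get q)} = l.countP P := by
  induction l with
  | nil => simp
  | cons a l ih =>
    refine (Fin.card_filter_univ_succ' (n := l.length) fun q => P ((a :: l).get q)).trans ?_
    rw [List.countP_cons, ← ih, add_comm]
    rfl

section NumPred

variable {d e : ℕ}

def IsMarking (u : List (Finset (Fin d))) (p : Fin d → Fin u.length) : Prop :=
  ∀ j q, j ∈ u.get q ↔ q = p j

theorem mem_numPredEncoding {N : (Fin d → ℕ) → ℕ → Prop} {u : List (Finset (Fin d))} :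
    u ∈ NumPredEncoding N ↔ ∃ p, IsMarking u p ∧ N (fun j => (p j : ℕ)) u.length :=
  Iff.rfl

theorem IsMarking.unique {u : List (Finset (Fin d))} {p p' : Fin d → Fin u.length}
    (hp : IsMarking u p) (hp' : IsMarking u p') : p = p' :=
  funext fun j => (hp' j (p j)).1 ((hp j (p j)).2 rfl)

theorem exists_isMarking_iff (u : List (Finset (Fin d))) :
    (∃ p, IsMarking u p) ↔ ∀ j, u.countP (j ∈ ·) = 1 := by
  simp only [← List.card_filter_get_eq_countP, decide_eq_true_eq, card_eq_one]
  constructor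
  · rintro ⟨p, hp⟩ j
    exact ⟨p j, by ext q; simp only [mem_filter, mem_univ, true_and, mem_singleton, hp j q]⟩
  · intro h
    choose p hp using h
    exact ⟨p, fun j q => by simpa using congrArg (q ∈ ·) (hp j)⟩

theorem numPredEncoding_true :
    NumPredEncoding (fun (_ : Fin d → ℕ) (_ : ℕ) => True) = {u | ∀ j, u.countP (j ∈ ·) = 1} := by
  ext u
  simp only [mem_numPredEncoding, and_true]
  exact exists_isMarking_iff u

theorem isRegularNumPred_true : IsRegularNumPred (fun (_ : Fin d → ℕ) (_ : ℕ) => True) := by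
  rw [IsRegularNumPred, numPredEncoding_true]
  exact Language.isRegular_setOf_forall_countP_eq_one _

theorem numPredEncoding_and (R S : (Fin d → ℕ) → ℕ → Prop) :
    NumPredEncoding (fun p n => R p n ∧ S p n) = NumPredEncoding R ⊓ NumPredEncoding S := by
  ext u
  simp only [Language.mem_inf, mem_numPredEncoding]
  constructor
  · rintro ⟨p, hp, hR, hS⟩
    exact ⟨⟨p, hp, hR⟩, p, hp, hS⟩
  · rintro ⟨⟨p, hp, hR⟩, p', hp', hS⟩
    obtain rfl := hp.unique hp'
    exact ⟨p, hp, hR, hS⟩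

theorem numPredEncoding_or (R S : (Fin d → ℕ) → ℕ → Prop) :
    NumPredEncoding (fun p n => R p n ∨ S p n) = NumPredEncoding R + NumPredEncoding S := by
  ext u
  simp only [Language.mem_add, mem_numPredEncoding, and_or_left, exists_or]

theorem IsRegularNumPred.and {R S : (Fin d → ℕ) → ℕ → Prop} (hR : IsRegularNumPred R)
    (hS : IsRegularNumPred S) : IsRegularNumPred fun p n => R p n ∧ S p n := by
  rw [IsRegularNumPred, numPredEncoding_and]
  exact hR.inf hS

theorem IsRegularNumPred.or {R S : (Fin d → ℕ) → ℕ → Prop} (hR : IsRegularNumPred R)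
    (hS : IsRegularNumPred S) : IsRegularNumPred fun p n => R p n ∨ S p n := by
  rw [IsRegularNumPred, numPredEncoding_or]
  exact hR.add hS

def relabelMarks (σ : Fin d → Fin e) (S : Finset (Fin e)) : Finset (Fin d) :=
  {j | σ j ∈ S}

theorem IsMarking.map_relabelMarks {u : List (Finset (Fin e))} {p : Fin e → Fin u.length}
    (hp : IsMarking u p) (σ : Fin d → Fin e) :
    IsMarking (u.map (relabelMarks σ)) fun j => Fin.cast (List.length_map _).symm (p (σ j)) := by
  intro j q
  have := hp (σ j) (Fin.cast (List.length_map _) q)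
  simp only [List.get_eq_getElem, List.getElem_map, relabelMarks, mem_filter, mem_univ,
    true_and, Fin.ext_iff, Fin.val_cast] at this ⊢
  exact this

theorem numPredEncoding_comp (R : (Fin d → ℕ) → ℕ → Prop) (σ : Fin d → Fin e) :
    NumPredEncoding (fun p n => R (fun j => p (σ j)) n) =
      (List.map (relabelMarks σ) ⁻¹' NumPredEncoding R : Language (Finset (Fin e))) ⊓
        NumPredEncoding (fun (_ : Fin e → ℕ) (_ : ℕ) => True) := by
  ext u
  constructor
  · rintro ⟨p, hp : IsMarking u p, hR⟩
    exact ⟨⟨_, hp.map_relabelMarks σ, by simpa using hR⟩, p, hp, trivial⟩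
  · rintro ⟨⟨p₁, hp₁ : IsMarking _ p₁, hR⟩, p, hp : IsMarking u p, -⟩
    obtain rfl := hp₁.unique (hp.map_relabelMarks σ)
    exact ⟨p, hp, by simpa using hR⟩

theorem IsRegularNumPred.comp {R : (Fin d → ℕ) → ℕ → Prop} (hR : IsRegularNumPred R)
    (σ : Fin d → Fin e) : IsRegularNumPred fun p n => R (fun j => p (σ j)) n := by
  rw [IsRegularNumPred, numPredEncoding_comp]
  exact (hR.preimage_map _).inf isRegularNumPred_true

end NumPred

namespace Fin

variable {α : Type*} {m n : ℕ}

theorem forall_add_and (hm : 1 ≤ m) (hn : 1 ≤ n) (P : (Fin m → α) → Prop)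
    (Q : (Fin n → α) → Prop) :
    (∀ i : Fin (m + n) → α, P (fun j => i (castAdd n j)) ∧ Q (fun j => i (natAdd m j))) ↔
      (∀ i, P i) ∧ ∀ i, Q i := by
  refine ⟨fun h => ⟨fun i₁ => ?_, fun i₂ => ?_⟩, fun h i => ⟨h.1 _, h.2 _⟩⟩
  · simpa using (h (append i₁ fun _ => i₁ ⟨0, hm⟩)).1
  · simpa using (h (append (fun _ => i₂ ⟨0, hn⟩) i₂)).2

theorem forall_add_or (P : (Fin m → α) → Prop) (Q : (Fin n → α) → Prop) :
    (∀ i : Fin (m + n) → α, P (fun j => i (castAdd n j)) ∨ Q (fun j => i (natAdd m j))) ↔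
      (∀ i, P i) ∨ ∀ i, Q i := by
  refine ⟨fun h => ?_, fun h i => h.imp (· _) (· _)⟩
  by_contra hc
  simp only [not_or, not_forall] at hc
  obtain ⟨⟨i₁, hi₁⟩, i₂, hi₂⟩ := hc
  simpa [hi₁, hi₂] using h (append i₁ i₂)

end Fin

namespace Pi1RegDefinable

open Fin

variable {A : Type*} {d₁ d₂ : ℕ} {L₁ L₂ : Set (List A)}

theorem inter (hL₁ : Pi1RegDefinable A d₁ L₁) (hL₂ : Pi1RegDefinable A d₂ L₂) (h₁ : 1 ≤ d₁)
    (h₂ : 1 ≤ d₂) : Pi1RegDefinable A (d₁ + d₂) (L₁ ∩ L₂) := by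
  obtain ⟨N₁, hreg₁, hdef₁⟩ := hL₁
  obtain ⟨N₂, hreg₂, hdef₂⟩ := hL₂
  refine ⟨fun a p n => N₁ (fun j => a (castAdd d₂ j)) (fun j => p (castAdd d₂ j)) n ∧
      N₂ (fun j => a (natAdd d₁ j)) (fun j => p (natAdd d₁ j)) n,
    fun a => ((hreg₁ _).comp _).and ((hreg₂ _).comp _), fun w => ?_⟩
  rw [Set.mem_inter_iff, hdef₁, hdef₂]
  exact (forall_add_and h₁ h₂ (fun i => N₁ (fun j => w.get (i j)) (fun j => i j) w.length)
    (fun i => N₂ (fun j => w.get (i j)) (fun j => i j) w.length)).symm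

theorem union (hL₁ : Pi1RegDefinable A d₁ L₁) (hL₂ : Pi1RegDefinable A d₂ L₂) :
    Pi1RegDefinable A (d₁ + d₂) (L₁ ∪ L₂) := by
  obtain ⟨N₁, hreg₁, hdef₁⟩ := hL₁
  obtain ⟨N₂, hreg₂, hdef₂⟩ := hL₂
  refine ⟨fun a p n => N₁ (fun j => a (castAdd d₂ j)) (fun j => p (castAdd d₂ j)) n ∨
      N₂ (fun j => a (natAdd d₁ j)) (fun j => p (natAdd d₁ j)) n,
    fun a => ((hreg₁ _).comp _).or ((hreg₂ _).comp _), fun w => ?_⟩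
  rw [Set.mem_union, hdef₁, hdef₂]
  exact (forall_add_or (fun i => N₁ (fun j => w.get (i j)) (fun j => i j) w.length)
    (fun i => N₂ (fun j => w.get (i j)) (fun j => i j) w.length)).symm

end Pi1RegDefinable

theorem pi1Reg_inter_union_general (A : Type) (d₁ d₂ : ℕ)
    (h₁ : 1 ≤ d₁) (h₂ : 1 ≤ d₂) (L₁ L₂ : Set (List A))
    (hL₁ : Pi1RegDefinable A d₁ L₁) (hL₂ : Pi1RegDefinable A d₂ L₂) :
    Pi1RegDefinable A (d₁ + d₂) (L₁ ∩ L₂) ∧ Pi1RegDefinable A (d₁ + d₂) (L₁ ∪ L₂) :=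
  ⟨hL₁.inter hL₂ h₁ h₂, hL₁.union hL₂⟩

theorem pi1Reg_inter_union (A : Type) [Fintype A] [Nonempty A] (d₁ d₂ : ℕ)
    (h₁ : 1 ≤ d₁) (h₂ : 1 ≤ d₂) (L₁ L₂ : Set (List A))
    (hL₁ : Pi1RegDefinable A d₁ L₁) (hL₂ : Pi1RegDefinable A d₂ L₂) :
    Pi1RegDefinable A (d₁ + d₂) (L₁ ∩ L₂) ∧ Pi1RegDefinable A (d₁ + d₂) (L₁ ∪ L₂) :=
  pi1Reg_inter_union_general A d₁ d₂ h₁ h₂ L₁ L₂ hL₁ hL₂
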